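/- The only positive semidefinite matrix in the subspace 𝒲 is the zero matrix: if W ∈ 𝒲 is positive semidefinite, then W = 0. -/

import Mathlib

open Matrix

/-- The general element of the subspace 𝒲 of 6×6 real symmetric matrices. -/
def Wmat (w : Fin 6 → ℝ) : Matrix (Fin 6) (Fin 6) ℝ :=
  !![0, 0, 0, w 0, w 1, w 2;
     0, -2 * w 0, -w 1, 0, w 3, w 4;
     0, -w 1, -2 * w 2, -w 3, -w 4, 0;
     w 0, 0, -w 3, 0, 0, w 5;
     w 1, w 3, -w 4, 0, -2 * w 5, 0;
     w 2, w 4, 0, w 5, 0, 0]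

/-! In a positive semidefinite matrix a zero diagonal entry forces its whole column to vanish.
The diagonal entries of `Wmat w` at 0, 3 and 5 are zero, and the columns through them contain
every coordinate of `w`. -/

open scoped ComplexOrder in
theorem Matrix.PosSemidef.apply_eq_zero_of_diag_eq_zero {𝕜 n : Type*} [RCLike 𝕜] [Fintype n]
    {A : Matrix n n 𝕜} (hA : A.PosSemidef) {i : n} (hi : A i i = 0) (j : n) :
    A j i = 0 := by
  classical
  have hcol : A *ᵥ Pi.single i 1 = 0 :=
    (hA.dotProduct_mulVec_zero_iff _).mp (by simp [mulVec_single, hi])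
  simpa [mulVec_single] using congrFun hcol j

theorem Wmat_zero : Wmat 0 = 0 := by
  ext i j
  fin_cases i <;> fin_cases j <;> simp [Wmat]

/-- The only positive semidefinite matrix in the subspace 𝒲 is the zero
matrix. -/
theorem posSemidef_mem_W_eq_zero (w : Fin 6 → ℝ)
    (h : (Wmat w).PosSemidef) : Wmat w = 0 := by
  have col0 := h.apply_eq_zero_of_diag_eq_zero (i := 0) (by simp [Wmat])
  have col3 := h.apply_eq_zero_of_diag_eq_zero (i := 3) (by simp [Wmat])
  have col5 := h.apply_eq_zero_of_diag_eq_zero (i := 5) (by simp [Wmat])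
  have hw : w = 0 := by
    funext k
    fin_cases k
    · simpa [Wmat] using col0 3
    · simpa [Wmat] using col0 4
    · simpa [Wmat] using col0 5
    · simpa [Wmat] using col3 2
    · simpa [Wmat] using col5 1
    · simpa [Wmat] using col5 3
  rw [hw, Wmat_zero]
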